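/- arXiv:2507.11111 — 3 statements merged into one kernel-verified Lean document; each statement's English description precedes it below -/
import Mathlib

section
/- Let g₀ be a smooth metric on U and let φ : U × [0,T] → ℝ be smooth with φ(·,0) = 0, such that for each t the matrix g(x,t) := g₀(x) − t·β(g₀)(x) + D²_x φ(x,t) is positive definite and ∂_t φ(x,t) = log( det g(x,t) / det g₀(x) ). Then g(x,t) is a solution of the geometric flow: ∂_t g_{ij}(x,t) = ∂_i∂_j log det g(x,t) for all (x,t) ∈ U × [0,T], and g(·,0) = g₀. In other words, any solution of the parabolic Monge–Ampère equation produces a solution of the flow. -/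
open Set Matrix

/-- Partial derivative in the `i`-th coordinate direction of a function on `ℝⁿ`. -/
noncomputable def pd (n : ℕ) (i : Fin n) (f : (Fin n → ℝ) → ℝ) (x : Fin n → ℝ) : ℝ :=
  fderiv ℝ f x (Pi.single i 1)

/-!
Writing `g = g₀ - t β(g₀) + D²ₓφ`, we get `∂ₜ g = -β(g₀) + D²ₓ(∂ₜφ)` because time and space
derivatives of the smooth function `φ` commute on `U × [0,T]` (symmetry of second derivatives
within a set, valid at points of the closure of its interior). The Monge–Ampère equation turns
`D²ₓ(∂ₜφ)` into `D²ₓ log det g - D²ₓ log det g₀ = D²ₓ log det g + β(g₀)`, and the `β(g₀)` terms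
cancel. The initial condition holds because `φ(·,0) = 0` has vanishing Hessian.
-/

open Filter Topology ContinuousLinearMap
open scoped ContDiff

section Symmetry

variable {X : Type*} [NormedAddCommGroup X] [NormedSpace ℝ X] {S : Set X} {F : X → ℝ} {p : X}

theorem ContDiffOn.fderivWithin_apply_const {k m : WithTop ℕ∞} (hF : ContDiffOn ℝ k F S)
    (hS : UniqueDiffOn ℝ S) (hmk : m + 1 ≤ k) (v : X) :
    ContDiffOn ℝ m (fun q => fderivWithin ℝ F S q v) S :=
  (hF.fderivWithin hS hmk).clm_apply contDiffOn_const

theorem fderivWithin_fderivWithin_apply_comm (hF : ContDiffOn ℝ 2 F S) (hS : UniqueDiffOn ℝ S)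
    (hp : p ∈ S) (hp' : p ∈ closure (interior S)) (v w : X) :
    fderivWithin ℝ (fun q => fderivWithin ℝ F S q v) S p w =
      fderivWithin ℝ (fun q => fderivWithin ℝ F S q w) S p v := by
  have hsymm : IsSymmSndFDerivWithinAt ℝ F S p :=
    (hF p hp).isSymmSndFDerivWithinAt (by simp) hS hp' hp
  have hD : DifferentiableWithinAt ℝ (fderivWithin ℝ F S) S p :=
    ((hF.fderivWithin hS (m := 1) (by norm_num)).differentiableOn one_ne_zero) p hp
  have hflip : ∀ u, fderivWithin ℝ (fun q => fderivWithin ℝ F S q u) S p =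
      (fderivWithin ℝ (fderivWithin ℝ F S) S p).flip u := fun u => by
    simpa using fderivWithin_clm_apply (hS p hp) hD (differentiableWithinAt_const u)
  simp only [hflip, flip_apply]
  exact hsymm w v

end Symmetry

section Slices

variable {E : Type*} [NormedAddCommGroup E] [NormedSpace ℝ E] {U : Set E} {I : Set ℝ}
  {F : E × ℝ → ℝ} {F' : E × ℝ →L[ℝ] ℝ} {z : E} {s : ℝ}

theorem HasFDerivWithinAt.hasFDerivAt_comp_prodMk_left
    (hF : HasFDerivWithinAt F F' (U ×ˢ I) (z, s)) (hU : U ∈ 𝓝 z) (hs : s ∈ I) :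
    HasFDerivAt (fun y => F (y, s)) (F'.comp (inl ℝ E ℝ)) z :=
  (hF.comp z (hasFDerivAt_prodMk_left z s).hasFDerivWithinAt
    fun y hy => (⟨hy, hs⟩ : (y, s) ∈ U ×ˢ I)).hasFDerivAt hU

theorem HasFDerivWithinAt.hasDerivWithinAt_comp_prodMk_right
    (hF : HasFDerivWithinAt F F' (U ×ˢ I) (z, s)) (hz : z ∈ U) :
    HasDerivWithinAt (fun u => F (z, u)) (F' (0, 1)) I s :=
  hF.comp_hasDerivWithinAt s ((hasDerivWithinAt_const s I z).prodMk (hasDerivWithinAt_id s I))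
    fun _ hu => ⟨hz, hu⟩

end Slices

theorem contDiffOn_det {E ι : Type*} [NormedAddCommGroup E] [NormedSpace ℝ E] [Fintype ι]
    [DecidableEq ι] {U : Set E} {m : WithTop ℕ∞} {A : E → Matrix ι ι ℝ}
    (hA : ∀ i j, ContDiffOn ℝ m (fun x => A x i j) U) :
    ContDiffOn ℝ m (fun x => (A x).det) U := by
  simp only [det_apply']
  exact ContDiffOn.sum fun σ _ => contDiffOn_const.mul (contDiffOn_prod fun k _ => hA (σ k) k)

section PartialDerivatives

variable {n : ℕ} {U : Set (Fin n → ℝ)} {f h : (Fin n → ℝ) → ℝ} {x : Fin n → ℝ} {i j : Fin n}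

theorem pd_congr {f' : (Fin n → ℝ) → ℝ} (hU : IsOpen U) (hf : EqOn f f' U) :
    EqOn (pd n i f) (pd n i f') U := fun y hy => by
  simp only [pd, (hf.eventuallyEq_of_mem (hU.mem_nhds hy)).fderiv_eq]

@[simp]
theorem pd_const (c : ℝ) : pd n i (fun _ => c) = fun _ => 0 :=
  funext fun _ => by simp [pd]

theorem ContDiffOn.pd {k m : WithTop ℕ∞} (hf : ContDiffOn ℝ k f U) (hU : IsOpen U)
    (hmk : m + 1 ≤ k) : ContDiffOn ℝ m (pd n i f) U :=
  (hf.fderiv_of_isOpen hU hmk).clm_apply contDiffOn_const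

theorem pd_add (hf : DifferentiableAt ℝ f x) (hh : DifferentiableAt ℝ h x) :
    pd n i (fun y => f y + h y) x = pd n i f x + pd n i h x := by
  simp [pd, fderiv_fun_add hf hh]

theorem pd_pd_add (hU : IsOpen U) (hf : ContDiffOn ℝ 2 f U) (hh : ContDiffOn ℝ 2 h U)
    (hx : x ∈ U) :
    pd n i (pd n j fun y => f y + h y) x = pd n i (pd n j f) x + pd n i (pd n j h) x := by
  have hdiff : ∀ {k : (Fin n → ℝ) → ℝ}, ContDiffOn ℝ 1 k U → ∀ y ∈ U, DifferentiableAt ℝ k y :=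
    fun hk y hy => (hk.differentiableOn one_ne_zero y hy).differentiableAt (hU.mem_nhds hy)
  rw [pd_congr hU (fun y hy => pd_add (hdiff (hf.of_le one_le_two) y hy)
    (hdiff (hh.of_le one_le_two) y hy)) hx]
  exact pd_add (hdiff (hf.pd hU (by norm_num)) x hx) (hdiff (hh.pd hU (by norm_num)) x hx)

variable {I : Set ℝ} {F : (Fin n → ℝ) × ℝ → ℝ} {s t : ℝ}

theorem pd_slice (hU : IsOpen U) (hF : DifferentiableOn ℝ F (U ×ˢ I)) (hs : s ∈ I) :
    EqOn (pd n i fun y => F (y, s))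
      (fun y => fderivWithin ℝ F (U ×ˢ I) (y, s) (Pi.single i 1, 0)) U := fun y hy => by
  have hF' := (hF (y, s) ⟨hy, hs⟩).hasFDerivWithinAt.hasFDerivAt_comp_prodMk_left
    (hU.mem_nhds hy) hs
  simp [pd, hF'.fderiv]

theorem pd_pd_slice (hU : IsOpen U) (hUI : UniqueDiffOn ℝ (U ×ˢ I))
    (hF : ContDiffOn ℝ 2 F (U ×ˢ I)) (hs : s ∈ I) :
    EqOn (pd n i (pd n j fun y => F (y, s)))
      (fun y => fderivWithin ℝ (fun q => fderivWithin ℝ F (U ×ˢ I) q (Pi.single j 1, 0))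
        (U ×ˢ I) (y, s) (Pi.single i 1, 0)) U := fun y hy => by
  rw [pd_congr hU (pd_slice hU (hF.differentiableOn (by norm_num)) hs) hy]
  have hFj := hF.fderivWithin_apply_const (m := 1) hUI (by norm_num) (Pi.single j 1, 0)
  exact pd_slice hU (hFj.differentiableOn one_ne_zero) hs hy

theorem hasDerivWithinAt_pd_pd_slice (hU : IsOpen U) (hI : UniqueDiffOn ℝ I)
    (hI' : I ⊆ closure (interior I)) (hF : ContDiffOn ℝ 3 F (U ×ˢ I)) (hx : x ∈ U) (ht : t ∈ I) :
    HasDerivWithinAt (fun s => pd n i (pd n j fun y => F (y, s)) x)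
      (pd n i (pd n j fun y => fderivWithin ℝ F (U ×ˢ I) (y, t) (0, 1)) x) I t := by
  set S := U ×ˢ I
  have hS : UniqueDiffOn ℝ S := hU.uniqueDiffOn.prod hI
  have hS' : S ⊆ closure (interior S) := by
    rw [interior_prod_eq, hU.interior_eq, closure_prod_eq]
    exact prod_mono subset_closure hI'
  have hp : (x, t) ∈ S := ⟨hx, ht⟩
  set ei : (Fin n → ℝ) × ℝ := (Pi.single i 1, 0)
  set ej : (Fin n → ℝ) × ℝ := (Pi.single j 1, 0)
  set Fj := fun q => fderivWithin ℝ F S q ej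
  set Ft := fun q => fderivWithin ℝ F S q (0, 1)
  set Fij := fun q => fderivWithin ℝ Fj S q ei
  have hF₂ : ContDiffOn ℝ 2 F S := hF.of_le (by norm_num)
  have hFj : ContDiffOn ℝ 2 Fj S := hF.fderivWithin_apply_const hS (by norm_num) ej
  have hFt : ContDiffOn ℝ 2 Ft S := hF.fderivWithin_apply_const hS (by norm_num) (0, 1)
  have hFij : ContDiffOn ℝ 1 Fij S := hFj.fderivWithin_apply_const hS (by norm_num) ei
  have hcomm : fderivWithin ℝ Fij S (x, t) (0, 1) =
      fderivWithin ℝ (fun q => fderivWithin ℝ Ft S q ej) S (x, t) ei := by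
    rw [fderivWithin_fderivWithin_apply_comm hFj hS hp (hS' hp) ei (0, 1),
      fderivWithin_congr' (fun q hq => fderivWithin_fderivWithin_apply_comm hF₂ hS hq (hS' hq)
        ej (0, 1)) hp]
  have hderiv : HasDerivWithinAt (fun s => Fij (x, s)) (fderivWithin ℝ Fij S (x, t) (0, 1)) I t :=
    (hFij.differentiableOn one_ne_zero (x, t) hp).hasFDerivWithinAt
      |>.hasDerivWithinAt_comp_prodMk_right hx
  rw [pd_pd_slice hU hS hFt ht hx]
  show HasDerivWithinAt _ (fderivWithin ℝ (fun q => fderivWithin ℝ Ft S q ej) S (x, t) ei) I t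
  rw [← hcomm]
  exact hderiv.congr_of_mem (fun s hs => pd_pd_slice hU hS hF₂ hs hx) ht

end PartialDerivatives

theorem stmt1_general
    (n : ℕ) (U : Set (Fin n → ℝ)) (hU : IsOpen U)
    (T : ℝ) (hT : 0 < T)
    -- `g₀` is a smooth metric on `U`
    (g₀ : (Fin n → ℝ) → Matrix (Fin n) (Fin n) ℝ)
    (hg₀smooth : ∀ i j : Fin n, ContDiffOn ℝ (⊤ : ℕ∞) (fun x => g₀ x i j) U)
    (hg₀pos : ∀ x ∈ U, (g₀ x).PosDef)
    -- `β(g₀)_{ij} = -∂_i∂_j log det g₀`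
    (β₀ : Fin n → Fin n → (Fin n → ℝ) → ℝ)
    (hβ : ∀ i j x, β₀ i j x = -(pd n i (pd n j (fun y => Real.log (g₀ y).det)) x))
    -- `φ` is smooth on `U × [0,T]` with `φ(·,0) = 0`
    (φ : (Fin n → ℝ) → ℝ → ℝ)
    (hφsmooth : ContDiffOn ℝ (⊤ : ℕ∞) (fun p : (Fin n → ℝ) × ℝ => φ p.1 p.2) (U ×ˢ Icc 0 T))
    (hφ0 : ∀ x ∈ U, φ x 0 = 0)
    -- `g(x,t) := g₀(x) - t β(g₀)(x) + D²ₓφ(x,t)`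
    (g : ℝ → (Fin n → ℝ) → Matrix (Fin n) (Fin n) ℝ)
    (hg : ∀ t x, g t x = Matrix.of (fun i j : Fin n =>
      g₀ x i j - t * β₀ i j x + pd n i (pd n j (fun y => φ y t)) x))
    -- `g(x,t)` is positive definite
    (hpos : ∀ t ∈ Icc (0:ℝ) T, ∀ x ∈ U, (g t x).PosDef)
    -- `∂_t φ(x,t) = log (det g(x,t) / det g₀(x))`
    (hMA : ∀ x ∈ U, ∀ t ∈ Icc (0:ℝ) T,
      HasDerivWithinAt (fun s => φ x s) (Real.log ((g t x).det / (g₀ x).det)) (Icc 0 T) t) :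
    -- then `g` solves the geometric flow `∂_t g_{ij}(x,t) = ∂_i∂_j log det g(x,t)`...
    (∀ x ∈ U, ∀ t ∈ Icc (0:ℝ) T, ∀ i j : Fin n,
      HasDerivWithinAt (fun s => g s x i j)
        (pd n i (pd n j (fun y => Real.log (g t y).det)) x) (Icc 0 T) t)
    ∧
    -- ...with initial value `g(·,0) = g₀`
    (∀ x ∈ U, g 0 x = g₀ x) := by
  set F : (Fin n → ℝ) × ℝ → ℝ := fun p => φ p.1 p.2
  have hS : UniqueDiffOn ℝ (U ×ˢ Icc 0 T) := hU.uniqueDiffOn.prod (uniqueDiffOn_Icc hT)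
  have hI : Icc 0 T ⊆ closure (interior (Icc 0 T)) := by rw [interior_Icc, closure_Ioo hT.ne]
  have hF : ContDiffOn ℝ 3 F (U ×ˢ Icc 0 T) := hφsmooth.of_le (WithTop.coe_le_coe.2 le_top)
  have hℓ₀ : ContDiffOn ℝ 2 (fun y => Real.log (g₀ y).det) U :=
    (contDiffOn_det hg₀smooth).log (fun y hy => (hg₀pos y hy).det_pos.ne')
      |>.of_le (WithTop.coe_le_coe.2 le_top)
  refine ⟨fun x hx t ht i j => ?_, fun x hx => ?_⟩
  · have hlog : EqOn (fun y => Real.log (g t y).det)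
        (fun y => fderivWithin ℝ F (U ×ˢ Icc 0 T) (y, t) (0, 1) + Real.log (g₀ y).det) U := by
      intro y hy
      beta_reduce
      have hφt := ((hF.differentiableOn (by norm_num)) (y, t) ⟨hy, ht⟩).hasFDerivWithinAt
        |>.hasDerivWithinAt_comp_prodMk_right hy
      rw [(uniqueDiffOn_Icc hT t ht).eq_deriv _ hφt (hMA y hy t ht),
        Real.log_div (hpos t ht y hy).det_pos.ne' (hg₀pos y hy).det_pos.ne', sub_add_cancel]
    have hφt₂ : ContDiffOn ℝ 2 (fun y => fderivWithin ℝ F (U ×ˢ Icc 0 T) (y, t) (0, 1)) U :=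
      (hF.fderivWithin_apply_const hS (by norm_num) (0, 1)).comp
        (contDiffOn_id.prodMk contDiffOn_const) fun y hy => ⟨hy, ht⟩
    have hg_eq : (fun s => g s x i j) =
        fun s => g₀ x i j - s * β₀ i j x + pd n i (pd n j fun y => F (y, s)) x :=
      funext fun s => by rw [hg, of_apply]
    rw [hg_eq, pd_congr hU (pd_congr hU hlog) hx, pd_pd_add hU hφt₂ hℓ₀ hx]
    refine (((hasDerivWithinAt_const t _ _).sub ((hasDerivWithinAt_id t _).mul_const _)).add
      (hasDerivWithinAt_pd_pd_slice hU (uniqueDiffOn_Icc hT) hI hF hx ht)).congr_deriv ?_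
    rw [hβ]
    ring
  · ext i j
    rw [hg, of_apply, zero_mul, sub_zero, pd_congr hU (pd_congr hU (f' := fun _ => 0) hφ0) hx]
    simp

/-- any solution `φ` of the parabolic Monge–Ampère equation
`∂_t φ = log (det (g₀ - t β(g₀) + D²ₓφ) / det g₀)`, `φ(·,0)=0`, with
`g(x,t) := g₀(x) - t β(g₀)(x) + D²ₓφ(x,t)` positive definite, produces a solution
of the geometric flow `∂_t g_{ij} = ∂_i∂_j log det g` with `g(·,0) = g₀`. -/
theorem stmt1
    (n : ℕ) (hn : 1 ≤ n) (U : Set (Fin n → ℝ)) (hU : IsOpen U) (hUne : U.Nonempty)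
    (T : ℝ) (hT : 0 < T)
    -- `g₀` is a smooth metric on `U`
    (g₀ : (Fin n → ℝ) → Matrix (Fin n) (Fin n) ℝ)
    (hg₀smooth : ∀ i j : Fin n, ContDiffOn ℝ (⊤ : ℕ∞) (fun x => g₀ x i j) U)
    (hg₀pos : ∀ x ∈ U, (g₀ x).PosDef)
    -- `β(g₀)_{ij} = -∂_i∂_j log det g₀`
    (β₀ : Fin n → Fin n → (Fin n → ℝ) → ℝ)
    (hβ : ∀ i j x, β₀ i j x = -(pd n i (pd n j (fun y => Real.log (g₀ y).det)) x))
    -- `φ` is smooth on `U × [0,T]` with `φ(·,0) = 0`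
    (φ : (Fin n → ℝ) → ℝ → ℝ)
    (hφsmooth : ContDiffOn ℝ (⊤ : ℕ∞) (fun p : (Fin n → ℝ) × ℝ => φ p.1 p.2) (U ×ˢ Icc 0 T))
    (hφ0 : ∀ x ∈ U, φ x 0 = 0)
    -- `g(x,t) := g₀(x) - t β(g₀)(x) + D²ₓφ(x,t)`
    (g : ℝ → (Fin n → ℝ) → Matrix (Fin n) (Fin n) ℝ)
    (hg : ∀ t x, g t x = Matrix.of (fun i j : Fin n =>
      g₀ x i j - t * β₀ i j x + pd n i (pd n j (fun y => φ y t)) x))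
    -- `g(x,t)` is positive definite
    (hpos : ∀ t ∈ Icc (0:ℝ) T, ∀ x ∈ U, (g t x).PosDef)
    -- `∂_t φ(x,t) = log (det g(x,t) / det g₀(x))`
    (hMA : ∀ x ∈ U, ∀ t ∈ Icc (0:ℝ) T,
      HasDerivWithinAt (fun s => φ x s) (Real.log ((g t x).det / (g₀ x).det)) (Icc 0 T) t) :
    -- then `g` solves the geometric flow `∂_t g_{ij}(x,t) = ∂_i∂_j log det g(x,t)`...
    (∀ x ∈ U, ∀ t ∈ Icc (0:ℝ) T, ∀ i j : Fin n,
      HasDerivWithinAt (fun s => g s x i j)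
        (pd n i (pd n j (fun y => Real.log (g t y).det)) x) (Icc 0 T) t)
    ∧
    -- ...with initial value `g(·,0) = g₀`
    (∀ x ∈ U, g 0 x = g₀ x) :=
  stmt1_general n U hU T hT g₀ hg₀smooth hg₀pos β₀ hβ φ hφsmooth hφ0 g hg hpos hMA
end

section
/- Let U ⊆ ℝⁿ be a nonempty open convex set and let g : U → (symmetric n×n real matrices) be a smooth map whose entries satisfy the Codazzi symmetry ∂_k g_{ij} = ∂_i g_{kj} on U for all indices i,j,k. Then there exists a smooth function φ : U → ℝ such that g_{ij} = ∂_i∂_j φ on U for all i,j. (This is the local characterization of Hessian metrics on an affine manifold: condition (3) of Proposition 2.3 implies g = ∇dφ locally.) -/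
/-!
For each `j`, the Codazzi symmetry says exactly that the 1-form `∑ᵢ g_{ij} dxᵢ` is closed, so by
the Poincaré lemma on the convex set `U` it has a smooth potential `f_j`, i.e. `∂ᵢ f_j = g_{ij}`.
The symmetry `g_{kj} = g_{jk}` then says that `∑ⱼ f_j dxⱼ` is closed as well, and a potential `φ`
of it satisfies `∂ᵢ∂ⱼ φ = ∂ᵢ f_j = g_{ij}`.
-/

open Set Matrix

theorem contDiffOn_succ_of_hasFDerivAt {𝕜 E F : Type*} [NontriviallyNormedField 𝕜]
    [NormedAddCommGroup E] [NormedSpace 𝕜 E] [NormedAddCommGroup F] [NormedSpace 𝕜 F]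
    {f : E → F} {f' : E → E →L[𝕜] F} {s : Set E} {n : ℕ∞} (hs : IsOpen s)
    (hf : ∀ x ∈ s, HasFDerivAt f (f' x) x) (hf' : ContDiffOn 𝕜 n f' s) :
    ContDiffOn 𝕜 (n + 1) f s := by
  rw [contDiffOn_succ_iff_fderiv_of_isOpen hs]
  refine ⟨fun x hx => (hf x hx).differentiableAt.differentiableWithinAt, by simp, ?_⟩
  exact hf'.congr fun x hx => (hf x hx).fderiv

theorem fderiv_apply_eq_sum_pd {n : ℕ} (f : (Fin n → ℝ) → ℝ) (x v : Fin n → ℝ) :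
    fderiv ℝ f x v = ∑ k, v k * pd n k f x := by
  conv_lhs => rw [pi_eq_sum_univ' v]
  simp [pd]

theorem pd_congr_of_eqOn {n : ℕ} {U : Set (Fin n → ℝ)} (hU : IsOpen U)
    {f₁ f₂ : (Fin n → ℝ) → ℝ} (h : EqOn f₁ f₂ U) {x : Fin n → ℝ} (hx : x ∈ U) (i : Fin n) :
    pd n i f₁ x = pd n i f₂ x := by
  rw [pd, pd, (h.eventuallyEq_of_mem (hU.mem_nhds hx)).fderiv_eq]

noncomputable def coordOneForm {n : ℕ} (a : Fin n → (Fin n → ℝ) → ℝ) (x : Fin n → ℝ) :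
    (Fin n → ℝ) →L[ℝ] ℝ :=
  ∑ i, a i x • ContinuousLinearMap.proj (R := ℝ) (φ := fun _ : Fin n => ℝ) i

theorem coordOneForm_apply {n : ℕ} (a : Fin n → (Fin n → ℝ) → ℝ) (x v : Fin n → ℝ) :
    coordOneForm a x v = ∑ i, a i x * v i := by
  simp [coordOneForm]

theorem exists_contDiffOn_pd_eq_of_pd_symm {n : ℕ} {U : Set (Fin n → ℝ)} (hU : IsOpen U)
    (hUconv : Convex ℝ U) {r : ℕ∞} (hr : r ≠ 0) {a : Fin n → (Fin n → ℝ) → ℝ}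
    (ha : ∀ i, ContDiffOn ℝ r (a i) U)
    (hsymm : ∀ x ∈ U, ∀ i k, pd n k (a i) x = pd n i (a k) x) :
    ∃ f : (Fin n → ℝ) → ℝ, ContDiffOn ℝ (r + 1) f U ∧ ∀ x ∈ U, ∀ i, pd n i f x = a i x := by
  have hr' : (r : WithTop ℕ∞) ≠ 0 := by exact_mod_cast hr
  have hω : ContDiffOn ℝ r (coordOneForm a) U :=
    ContDiffOn.sum fun i _ => (ha i).smul contDiffOn_const
  have hdω : ∀ x ∈ U, HasFDerivAt (coordOneForm a)
      (∑ i, (fderiv ℝ (a i) x).smulRight (ContinuousLinearMap.proj i)) x := fun x hx =>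
    HasFDerivAt.fun_sum fun i _ =>
      (((ha i).differentiableOn hr').differentiableAt (hU.mem_nhds hx)).hasFDerivAt.smul_const
        (ContinuousLinearMap.proj (R := ℝ) (φ := fun _ : Fin n => ℝ) i)
  have hω_closed : ∀ x ∈ U, ∀ v w, fderiv ℝ (coordOneForm a) x v w =
      fderiv ℝ (coordOneForm a) x w v := by
    intro x hx v w
    simp only [(hdω x hx).fderiv, FunLike.coe_sum, Finset.sum_apply,
      ContinuousLinearMap.smulRight_apply, _root_.smul_apply,
      ContinuousLinearMap.proj_apply, smul_eq_mul, fderiv_apply_eq_sum_pd, Finset.sum_mul]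
    rw [Finset.sum_comm]
    refine Finset.sum_congr rfl fun k _ => Finset.sum_congr rfl fun i _ => ?_
    rw [hsymm x hx i k]
    ring
  obtain ⟨f, hf⟩ := hUconv.exists_forall_hasFDerivAt_of_fderiv_symmetric hU
    (hω.differentiableOn hr') hω_closed
  refine ⟨f, contDiffOn_succ_of_hasFDerivAt hU hf hω, fun x hx i => ?_⟩
  simp [pd, (hf x hx).fderiv, coordOneForm_apply, Pi.single_apply]

theorem stmt2_general
    (n : ℕ) (U : Set (Fin n → ℝ)) (hU : IsOpen U) (hUconv : Convex ℝ U)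
    (g : (Fin n → ℝ) → Matrix (Fin n) (Fin n) ℝ)
    (hsmooth : ∀ i j : Fin n, ContDiffOn ℝ (⊤ : ℕ∞) (fun x => g x i j) U)
    (hsymm : ∀ x ∈ U, (g x).IsSymm)
    (hcod : ∀ x ∈ U, ∀ i j k : Fin n,
      pd n k (fun y => g y i j) x = pd n i (fun y => g y k j) x) :
    ∃ φ : (Fin n → ℝ) → ℝ, ContDiffOn ℝ (⊤ : ℕ∞) φ U ∧
      ∀ x ∈ U, ∀ i j : Fin n, g x i j = pd n i (pd n j φ) x := by
  choose f hf_smooth hf using fun j =>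
    exists_contDiffOn_pd_eq_of_pd_symm hU hUconv ENat.top_ne_zero (fun i => hsmooth i j)
      fun x hx i k => hcod x hx i j k
  obtain ⟨φ, hφ_smooth, hφ⟩ := exists_contDiffOn_pd_eq_of_pd_symm hU hUconv ENat.top_ne_zero
    (fun j => (hf_smooth j).of_le le_self_add)
    fun x hx j k => by rw [hf k x hx, hf j x hx, (hsymm x hx).apply]
  refine ⟨φ, hφ_smooth.of_le le_self_add, fun x hx i j => ?_⟩
  rw [pd_congr_of_eqOn hU (fun y hy => hφ y hy j) hx, hf j x hx]

/-- on a nonempty open convex set `U ⊆ ℝⁿ`, a smooth symmetric-matrix-valued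
map `g` with the Codazzi symmetry `∂_k g_{ij} = ∂_i g_{kj}` is a Hessian:
there is a smooth `φ : U → ℝ` with `g_{ij} = ∂_i∂_j φ` on `U`. -/
theorem stmt2
    (n : ℕ) (hn : 1 ≤ n) (U : Set (Fin n → ℝ)) (hU : IsOpen U) (hUconv : Convex ℝ U)
    (hUne : U.Nonempty)
    (g : (Fin n → ℝ) → Matrix (Fin n) (Fin n) ℝ)
    (hsmooth : ∀ i j : Fin n, ContDiffOn ℝ (⊤ : ℕ∞) (fun x => g x i j) U)
    (hsymm : ∀ x ∈ U, (g x).IsSymm)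
    (hcod : ∀ x ∈ U, ∀ i j k : Fin n,
      pd n k (fun y => g y i j) x = pd n i (fun y => g y k j) x) :
    ∃ φ : (Fin n → ℝ) → ℝ, ContDiffOn ℝ (⊤ : ℕ∞) φ U ∧
      ∀ x ∈ U, ∀ i j : Fin n, g x i j = pd n i (pd n j φ) x :=
  stmt2_general n U hU hUconv g hsmooth hsymm hcod
end

section
/- Let g : U × [0,S] → (symmetric positive-definite n×n real matrices) be a smooth solution of the geometric flow ∂_t g_{ij}(x,t) = ∂_i∂_j log det g(x,t) on an open set U ⊆ ℝⁿ. Define G̃_{ij}(z,t) := g_{ij}(Re z, t/4) on T_U × [0, 4S]. Then G̃ is a solution of the Chern–Ricci flow on the tube domain: for all (z,t) ∈ T_U × [0,4S] and all i,j, ∂_t G̃_{ij}(z,t) = ∂²/∂z^i∂z̄^j [ log det G̃(·,t) ](z) = −R_{i j̄}(G̃(·,t))(z), with initial value G̃_{ij}(z,0) = g_{ij}(Re z, 0). -/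
/-! Along the tube domain `G̃` depends only on `Re z`, and for a function `f ∘ Re` both Wirtinger
derivatives `∂/∂z^j`, `∂/∂z̄^j` reduce to `½ ∂/∂x^j`. Hence `∂²/∂z^i∂z̄^j log det G̃ = ¼ ∂_i∂_j log det g`,
and the factor `¼` is exactly absorbed by the time rescaling `t ↦ t/4`. -/

open Set Matrix

/-- The real part map `ℂⁿ → ℝⁿ` (the projection `π` of the tube domain). -/
def rePart (n : ℕ) (z : Fin n → ℂ) : Fin n → ℝ := fun k => (z k).re

/-- Wirtinger derivative `∂f/∂z^j = ½(∂f/∂x^j - i ∂f/∂y^j)`. -/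
noncomputable def wdz (n : ℕ) (j : Fin n) (f : (Fin n → ℂ) → ℂ) (z : Fin n → ℂ) : ℂ :=
  (1/2 : ℂ) * (fderiv ℝ f z (Pi.single j 1)
    - Complex.I * fderiv ℝ f z (Pi.single j Complex.I))

/-- Wirtinger derivative `∂f/∂z̄^j = ½(∂f/∂x^j + i ∂f/∂y^j)`. -/
noncomputable def wdzbar (n : ℕ) (j : Fin n) (f : (Fin n → ℂ) → ℂ) (z : Fin n → ℂ) : ℂ :=
  (1/2 : ℂ) * (fderiv ℝ f z (Pi.single j 1)
    + Complex.I * fderiv ℝ f z (Pi.single j Complex.I))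

open Filter Topology

theorem ContDiffOn.det {E : Type*} [NormedAddCommGroup E] [NormedSpace ℝ E]
    {ι : Type*} [Fintype ι] [DecidableEq ι] {k : WithTop ℕ∞} {s : Set E}
    {M : E → Matrix ι ι ℝ} (hM : ∀ i j, ContDiffOn ℝ k (fun y => M y i j) s) :
    ContDiffOn ℝ k (fun y => (M y).det) s := by
  simp only [Matrix.det_apply']
  exact ContDiffOn.sum fun σ _ => contDiffOn_const.mul (contDiffOn_prod fun i _ => hM (σ i) i)

theorem Complex.log_det_map_ofReal {ι : Type*} [Fintype ι] [DecidableEq ι] {M : Matrix ι ι ℝ}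
    (hM : 0 ≤ M.det) : Complex.log (M.map ((↑) : ℝ → ℂ)).det = Real.log M.det := by
  rw [Complex.ofReal_log hM]
  exact congrArg _ (RingHom.map_det Complex.ofRealHom M).symm

theorem HasDerivWithinAt.comp_div_const_Icc {E : Type*} [NormedAddCommGroup E] [NormedSpace ℝ E]
    {f : ℝ → E} {f' : E} {S c t : ℝ} (hc : 0 < c) (hf : HasDerivWithinAt f f' (Icc 0 S) (t / c)) :
    HasDerivWithinAt (fun s => f (s / c)) (c⁻¹ • f') (Icc 0 (c * S)) t := by
  have hmaps : MapsTo (fun s : ℝ => s / c) (Icc 0 (c * S)) (Icc 0 S) := fun s hs =>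
    ⟨div_nonneg hs.1 hc.le, (div_le_iff₀' hc).2 hs.2⟩
  simpa [div_eq_mul_inv, mul_comm, Function.comp_def] using
    hf.scomp t ((hasDerivAt_id t).div_const c).hasDerivWithinAt hmaps

section Wirtinger

variable {n : ℕ}

noncomputable def rePartCLM (n : ℕ) : (Fin n → ℂ) →L[ℝ] Fin n → ℝ :=
  ContinuousLinearMap.pi fun k => Complex.reCLM.comp (ContinuousLinearMap.proj k)

@[simp]
theorem rePartCLM_apply (z : Fin n → ℂ) : rePartCLM n z = rePart n z := rfl

theorem continuous_rePart : Continuous (rePart n) := (rePartCLM n).continuous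

theorem rePart_single (j : Fin n) (c : ℂ) :
    rePart n (Pi.single j c) = Pi.single j c.re := by
  funext k
  by_cases hk : k = j
  · subst hk; simp [rePart]
  · simp [rePart, hk]

theorem fderiv_ofReal_comp_rePart_apply {h : (Fin n → ℝ) → ℝ} {z : Fin n → ℂ}
    (hh : DifferentiableAt ℝ h (rePart n z)) (j : Fin n) (c : ℂ) :
    fderiv ℝ (fun w => (h (rePart n w) : ℂ)) z (Pi.single j c) = c.re * pd n j h (rePart n z) := by
  have hd : HasFDerivAt (fun w => (h (rePart n w) : ℂ))
      (Complex.ofRealCLM.comp ((fderiv ℝ h (rePart n z)).comp (rePartCLM n))) z :=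
    Complex.ofRealCLM.hasFDerivAt.comp z (hh.hasFDerivAt.comp z (rePartCLM n).hasFDerivAt)
  have hlin : fderiv ℝ h (rePart n z) (Pi.single j c.re) = c.re * pd n j h (rePart n z) := by
    rw [pd, ← smul_eq_mul, ← map_smul, ← Pi.single_smul', smul_eq_mul, mul_one]
  simp [hd.fderiv, rePart_single, hlin]

theorem wdz_ofReal_comp_rePart {h : (Fin n → ℝ) → ℝ} {z : Fin n → ℂ}
    (hh : DifferentiableAt ℝ h (rePart n z)) (j : Fin n) :
    wdz n j (fun w => (h (rePart n w) : ℂ)) z = pd n j h (rePart n z) / 2 := by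
  simp only [wdz, fderiv_ofReal_comp_rePart_apply hh, Complex.one_re, Complex.I_re]
  push_cast
  ring

theorem wdzbar_ofReal_comp_rePart {h : (Fin n → ℝ) → ℝ} {z : Fin n → ℂ}
    (hh : DifferentiableAt ℝ h (rePart n z)) (j : Fin n) :
    wdzbar n j (fun w => (h (rePart n w) : ℂ)) z = pd n j h (rePart n z) / 2 := by
  simp only [wdzbar, fderiv_ofReal_comp_rePart_apply hh, Complex.one_re, Complex.I_re]
  push_cast
  ring

theorem Filter.EventuallyEq.wdz {f₁ f₂ : (Fin n → ℂ) → ℂ} {z : Fin n → ℂ}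
    (h : f₁ =ᶠ[𝓝 z] f₂) (j : Fin n) : wdz n j f₁ z = wdz n j f₂ z := by
  simp only [_root_.wdz, h.fderiv_eq]

theorem Filter.EventuallyEq.wdzbar {f₁ f₂ : (Fin n → ℂ) → ℂ} {z : Fin n → ℂ}
    (h : f₁ =ᶠ[𝓝 z] f₂) (j : Fin n) : wdzbar n j f₁ =ᶠ[𝓝 z] wdzbar n j f₂ := by
  filter_upwards [h.fderiv (𝕜 := ℝ)] with w hw
  simp only [_root_.wdzbar, hw]

theorem wdz_wdzbar_ofReal_comp_rePart {F : (Fin n → ℝ) → ℝ} {z : Fin n → ℂ}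
    (hF : ContDiffAt ℝ 2 F (rePart n z)) (i j : Fin n) :
    wdz n i (fun w => wdzbar n j (fun w' => (F (rePart n w') : ℂ)) w) z
      = pd n i (pd n j F) (rePart n z) / 4 := by
  have hFnear : ∀ᶠ w in 𝓝 z, DifferentiableAt ℝ F (rePart n w) :=
    continuous_rePart.continuousAt.eventually
      ((hF.eventually (by simp)).mono fun y hy => hy.differentiableAt (by simp))
  have hinner : (fun w => wdzbar n j (fun w' => (F (rePart n w') : ℂ)) w)
      =ᶠ[𝓝 z] fun w => ((((2 : ℝ)⁻¹ • pd n j F) (rePart n w) : ℝ) : ℂ) := by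
    filter_upwards [hFnear] with w hw
    rw [wdzbar_ofReal_comp_rePart hw]
    push_cast [Pi.smul_apply, smul_eq_mul]
    ring
  have hpdF : DifferentiableAt ℝ (pd n j F) (rePart n z) :=
    ((hF.fderiv_right (m := 1) (by norm_num)).clm_apply contDiffAt_const).differentiableAt
      (by simp)
  have hpd_smul : pd n i ((2 : ℝ)⁻¹ • pd n j F) (rePart n z)
      = (2 : ℝ)⁻¹ * pd n i (pd n j F) (rePart n z) := by
    simp [pd, fderiv_const_smul_field]
  rw [hinner.wdz i, wdz_ofReal_comp_rePart (hpdF.const_smul _), hpd_smul]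
  push_cast
  ring

end Wirtinger

theorem stmt11_general
    (n : ℕ) (U : Set (Fin n → ℝ)) (hU : IsOpen U)
    (S : ℝ)
    (g : ℝ → (Fin n → ℝ) → Matrix (Fin n) (Fin n) ℝ)
    -- `g` is smooth (jointly in space and time) on `U × [0,S]`
    (hsmooth : ∀ i j : Fin n, ContDiffOn ℝ (⊤ : ℕ∞)
      (fun p : (Fin n → ℝ) × ℝ => g p.2 p.1 i j) (U ×ˢ Icc 0 S))
    (hpos : ∀ t ∈ Icc (0:ℝ) S, ∀ x ∈ U, (g t x).PosDef)
    -- `g` solves the geometric flow `∂_t g_{ij}(x,t) = ∂_i∂_j log det g(x,t)`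
    (hflow : ∀ x ∈ U, ∀ t ∈ Icc (0:ℝ) S, ∀ i j : Fin n,
      HasDerivWithinAt (fun s => g s x i j)
        (pd n i (pd n j (fun y => Real.log (g t y).det)) x) (Icc 0 S) t)
    -- `G̃_{ij}(z,t) := g_{ij}(Re z, t/4)`
    (Gt : ℝ → (Fin n → ℂ) → Matrix (Fin n) (Fin n) ℂ)
    (hGt : ∀ t w, Gt t w = Matrix.of (fun i j : Fin n => ((g (t/4) (rePart n w) i j : ℝ) : ℂ)))
    -- Chern–Ricci curvature `R_{ij̄}(G̃) = -∂²(log det G̃)/∂z^i∂z̄^j`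
    (R : ℝ → (Fin n → ℂ) → Fin n → Fin n → ℂ)
    (hR : ∀ t z i j, R t z i j =
      -(wdz n i (fun w => wdzbar n j (fun w' => Complex.log (Gt t w').det) w) z)) :
    -- `G̃` solves the Chern–Ricci flow `∂_t G̃_{ij} = ∂²(log det G̃)/∂z^i∂z̄^j = -R_{ij̄}(G̃)`...
    (∀ z : Fin n → ℂ, rePart n z ∈ U → ∀ t ∈ Icc (0:ℝ) (4*S), ∀ i j : Fin n,
      HasDerivWithinAt (fun s => Gt s z i j)
        (wdz n i (fun w => wdzbar n j (fun w' => Complex.log (Gt t w').det) w) z)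
        (Icc 0 (4*S)) t
      ∧ wdz n i (fun w => wdzbar n j (fun w' => Complex.log (Gt t w').det) w) z
          = -(R t z i j))
    ∧
    -- ...with initial value `G̃_{ij}(z,0) = g_{ij}(Re z, 0)`
    (∀ z : Fin n → ℂ, rePart n z ∈ U → ∀ i j : Fin n,
      Gt 0 z i j = ((g 0 (rePart n z) i j : ℝ) : ℂ)) := by
  refine ⟨fun z hz t ht i j => ?_, fun z _ i j => by simp [hGt]⟩
  have hτ : t / 4 ∈ Icc (0 : ℝ) S := ⟨by linarith [ht.1], by linarith [ht.2]⟩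
  have hdet_pos : ∀ y ∈ U, 0 < (g (t / 4) y).det := fun y hy => (hpos _ hτ y hy).det_pos
  set F : (Fin n → ℝ) → ℝ := fun y => Real.log (g (t / 4) y).det
  have hF : ContDiffAt ℝ 2 F (rePart n z) := by
    have hslice : ∀ a b, ContDiffOn ℝ (⊤ : ℕ∞) (fun y => g (t / 4) y a b) U := fun a b =>
      (hsmooth a b).comp (contDiff_id.prodMk contDiff_const).contDiffOn fun y hy => ⟨hy, hτ⟩
    exact ((ContDiffOn.det hslice).log fun y hy => (hdet_pos y hy).ne')
      |>.contDiffAt (hU.mem_nhds hz) |>.of_le (by norm_cast)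
  have hlog : (fun w => Complex.log (Gt t w).det) =ᶠ[𝓝 z] fun w => (F (rePart n w) : ℂ) := by
    filter_upwards [continuous_rePart.continuousAt.preimage_mem_nhds (hU.mem_nhds hz)] with w hw
    rw [hGt]
    exact Complex.log_det_map_ofReal (hdet_pos _ hw).le
  have hwirt : wdz n i (fun w => wdzbar n j (fun w' => Complex.log (Gt t w').det) w) z
      = pd n i (pd n j F) (rePart n z) / 4 :=
    ((hlog.wdzbar j).wdz i).trans (wdz_wdzbar_ofReal_comp_rePart hF i j)
  refine ⟨?_, by rw [hR, neg_neg]⟩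
  rw [hwirt]
  simp only [hGt, Matrix.of_apply]
  convert ((hflow _ hz _ hτ i j).comp_div_const_Icc four_pos).ofReal_comp using 1
  push_cast [smul_eq_mul]
  ring

/-- if `g(t)` solves the geometric flow `∂_t g_{ij} = ∂_i∂_j log det g` on
`U × [0,S]`, then `G̃_{ij}(z,t) := g_{ij}(Re z, t/4)` solves the Chern–Ricci flow
`∂_t G̃_{ij} = ∂²(log det G̃)/∂z^i∂z̄^j = -R_{ij̄}(G̃)` on `T_U × [0,4S]`, with initial
value `G̃_{ij}(z,0) = g_{ij}(Re z, 0)`. -/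
theorem stmt11
    (n : ℕ) (hn : 1 ≤ n) (U : Set (Fin n → ℝ)) (hU : IsOpen U) (hUne : U.Nonempty)
    (S : ℝ) (hS : 0 < S)
    (g : ℝ → (Fin n → ℝ) → Matrix (Fin n) (Fin n) ℝ)
    -- `g` is smooth (jointly in space and time) on `U × [0,S]`
    (hsmooth : ∀ i j : Fin n, ContDiffOn ℝ (⊤ : ℕ∞)
      (fun p : (Fin n → ℝ) × ℝ => g p.2 p.1 i j) (U ×ˢ Icc 0 S))
    (hpos : ∀ t ∈ Icc (0:ℝ) S, ∀ x ∈ U, (g t x).PosDef)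
    -- `g` solves the geometric flow `∂_t g_{ij}(x,t) = ∂_i∂_j log det g(x,t)`
    (hflow : ∀ x ∈ U, ∀ t ∈ Icc (0:ℝ) S, ∀ i j : Fin n,
      HasDerivWithinAt (fun s => g s x i j)
        (pd n i (pd n j (fun y => Real.log (g t y).det)) x) (Icc 0 S) t)
    -- `G̃_{ij}(z,t) := g_{ij}(Re z, t/4)`
    (Gt : ℝ → (Fin n → ℂ) → Matrix (Fin n) (Fin n) ℂ)
    (hGt : ∀ t w, Gt t w = Matrix.of (fun i j : Fin n => ((g (t/4) (rePart n w) i j : ℝ) : ℂ)))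
    -- Chern–Ricci curvature `R_{ij̄}(G̃) = -∂²(log det G̃)/∂z^i∂z̄^j`
    (R : ℝ → (Fin n → ℂ) → Fin n → Fin n → ℂ)
    (hR : ∀ t z i j, R t z i j =
      -(wdz n i (fun w => wdzbar n j (fun w' => Complex.log (Gt t w').det) w) z)) :
    -- `G̃` solves the Chern–Ricci flow `∂_t G̃_{ij} = ∂²(log det G̃)/∂z^i∂z̄^j = -R_{ij̄}(G̃)`...
    (∀ z : Fin n → ℂ, rePart n z ∈ U → ∀ t ∈ Icc (0:ℝ) (4*S), ∀ i j : Fin n,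
      HasDerivWithinAt (fun s => Gt s z i j)
        (wdz n i (fun w => wdzbar n j (fun w' => Complex.log (Gt t w').det) w) z)
        (Icc 0 (4*S)) t
      ∧ wdz n i (fun w => wdzbar n j (fun w' => Complex.log (Gt t w').det) w) z
          = -(R t z i j))
    ∧
    -- ...with initial value `G̃_{ij}(z,0) = g_{ij}(Re z, 0)`
    (∀ z : Fin n → ℂ, rePart n z ∈ U → ∀ i j : Fin n,
      Gt 0 z i j = ((g 0 (rePart n z) i j : ℝ) : ℂ)) :=
  stmt11_general n U hU S g hsmooth hpos hflow Gt hGt R hR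
end
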